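/- arXiv:math/9311201 — 5 statements merged into one kernel-verified Lean document; each statement's English description precedes it below -/
import Mathlib

section
/- For every real number x with 1/3 ≤ x ≤ 1/2, one has (x + 1/6 + 0.001)^1.9 + (1 - x + 1/6 + 0.001)^1.9 ≤ 1. -/
lemma rpow_19_10_le (a q : ℝ) (ha : 0 ≤ a) (hq : 0 ≤ q)
    (h : a ^ (19 : ℕ) ≤ q ^ (10 : ℕ)) : a ^ (1.9 : ℝ) ≤ q := by
  have key : a ^ (1.9 : ℝ) = (a ^ (19 : ℕ)) ^ ((1 : ℝ)/10) := by
    rw [← Real.rpow_natCast a 19, ← Real.rpow_mul ha]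
    norm_num
  rw [key]
  calc (a ^ (19 : ℕ)) ^ ((1 : ℝ)/10)
      ≤ (q ^ (10 : ℕ)) ^ ((1 : ℝ)/10) :=
        Real.rpow_le_rpow (pow_nonneg ha _) h (by norm_num)
    _ = q := by
        rw [← Real.rpow_natCast q 10, ← Real.rpow_mul hq]
        norm_num

theorem stmt_0 (x : ℝ) (hx1 : 1/3 ≤ x) (hx2 : x ≤ 1/2) :
    (x + 1/6 + 0.001) ^ (1.9 : ℝ) + (1 - x + 1/6 + 0.001) ^ (1.9 : ℝ) ≤ 1 := by
  have hcvx : ConvexOn ℝ (Set.Ici 0) fun t : ℝ => t ^ (1.9 : ℝ) :=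
    convexOn_rpow (by norm_num)
  set t : ℝ := 3 - 6 * x with ht
  have ht0 : 0 ≤ t := by simp only [ht]; linarith
  have ht1 : 0 ≤ 1 - t := by simp only [ht]; linarith
  have hsum : t + (1 - t) = 1 := by ring
  -- convexity applied to the first term
  have h1 : (x + 1/6 + 0.001) ^ (1.9 : ℝ)
      ≤ t * ((1/3 + 1/6 + 0.001) ^ (1.9 : ℝ)) + (1 - t) * ((1/2 + 1/6 + 0.001) ^ (1.9 : ℝ)) := by
    have := hcvx.2 (x := (1/3 + 1/6 + 0.001 : ℝ)) (y := (1/2 + 1/6 + 0.001 : ℝ))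
      (by norm_num) (by norm_num) ht0 ht1 hsum
    have harg : t • (1/3 + 1/6 + 0.001 : ℝ) + (1 - t) • (1/2 + 1/6 + 0.001 : ℝ)
        = x + 1/6 + 0.001 := by
      simp only [smul_eq_mul, ht]; ring
    rw [harg] at this
    simpa using this
  have h2 : (1 - x + 1/6 + 0.001) ^ (1.9 : ℝ)
      ≤ t * ((2/3 + 1/6 + 0.001) ^ (1.9 : ℝ)) + (1 - t) * ((1/2 + 1/6 + 0.001) ^ (1.9 : ℝ)) := by
    have := hcvx.2 (x := (2/3 + 1/6 + 0.001 : ℝ)) (y := (1/2 + 1/6 + 0.001 : ℝ))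
      (by norm_num) (by norm_num) ht0 ht1 hsum
    have harg : t • (2/3 + 1/6 + 0.001 : ℝ) + (1 - t) • (1/2 + 1/6 + 0.001 : ℝ)
        = 1 - x + 1/6 + 0.001 := by
      simp only [smul_eq_mul, ht]; ring
    rw [harg] at this
    simpa using this
  -- numeric bounds at the endpoints
  have b1 : ((1/3 + 1/6 + 0.001 : ℝ)) ^ (1.9 : ℝ) ≤ 27/100 := by
    have : ((1/3 + 1/6 + 0.001 : ℝ)) = 501/1000 := by norm_num
    rw [this]
    exact rpow_19_10_le _ _ (by norm_num) (by norm_num) (by norm_num)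
  have b2 : ((2/3 + 1/6 + 0.001 : ℝ)) ^ (1.9 : ℝ) ≤ 71/100 := by
    have : ((2/3 + 1/6 + 0.001 : ℝ)) = 2503/3000 := by norm_num
    rw [this]
    exact rpow_19_10_le _ _ (by norm_num) (by norm_num) (by norm_num)
  have b3 : ((1/2 + 1/6 + 0.001 : ℝ)) ^ (1.9 : ℝ) ≤ 47/100 := by
    have : ((1/2 + 1/6 + 0.001 : ℝ)) = 2003/3000 := by norm_num
    rw [this]
    exact rpow_19_10_le _ _ (by norm_num) (by norm_num) (by norm_num)
  nlinarith [h1, h2, b1, b2, b3, ht0, ht1,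
    mul_le_mul_of_nonneg_left b1 ht0, mul_le_mul_of_nonneg_left b2 ht0,
    mul_le_mul_of_nonneg_left b3 ht1]
end

section
/- In any diagonal triangulation of a convex polygon (cycle) with n ≥ 4 vertices, modeled as a maximal outerplanar graph on vertices 0,...,n-1 arranged on a circle, there exists a chord (a triangulation edge that is not a boundary edge) that divides the boundary cycle into two arcs each of length at least ⌈n/3⌉, where the arc lengths sum to n. -/
/-- `e` is a chord of the convex polygon with vertices `0, ..., n-1` on a circle:
its endpoints are distinct, non-adjacent vertices (cyclically). -/
def IsChord (n : ℕ) (e : ℕ × ℕ) : Prop :=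
  e.1 < e.2 ∧ e.2 < n ∧ 2 ≤ e.2 - e.1 ∧ e.2 - e.1 ≤ n - 2

/-- Two chords (each written with smaller endpoint first) cross in the interior of the
circle iff their endpoint pairs interleave. -/
def Crosses (e f : ℕ × ℕ) : Prop :=
  (e.1 < f.1 ∧ f.1 < e.2 ∧ e.2 < f.2) ∨ (f.1 < e.1 ∧ e.1 < f.2 ∧ f.2 < e.2)

/-- A diagonal triangulation of the `n`-gon (maximal outerplanar graph): a set of `n - 3`
pairwise non-crossing chords; such a set divides the disk into triangles, with each
boundary edge a side of a triangle. -/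
def IsTriangulation (n : ℕ) (T : Finset (ℕ × ℕ)) : Prop :=
  (∀ e ∈ T, IsChord n e) ∧ (∀ e ∈ T, ∀ f ∈ T, ¬ Crosses e f) ∧ T.card = n - 3


def Lam (F : Finset (ℕ × ℕ)) : Prop :=
  ∀ x ∈ F, ∀ y ∈ F,
    x.2 ≤ y.1 ∨ y.2 ≤ x.1 ∨ (x.1 ≤ y.1 ∧ y.2 ≤ x.2) ∨ (y.1 ≤ x.1 ∧ x.2 ≤ y.2)

lemma lam_subset {F G : Finset (ℕ × ℕ)} (h : F ⊆ G) (hG : Lam G) : Lam F :=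
  fun x hx y hy => hG x (h hx) y (h hy)

lemma exists_leftmax (F : Finset (ℕ × ℕ)) (hne : F.Nonempty) :
    ∃ z ∈ F, (∀ x ∈ F, z.1 ≤ x.1) ∧ (∀ x ∈ F, x.1 = z.1 → x.2 ≤ z.2) := by
  have h1 : (F.image Prod.fst).Nonempty := hne.image _
  have hG : (F.filter (fun x => x.1 = (F.image Prod.fst).min' h1)).Nonempty := by
    have := (F.image Prod.fst).min'_mem h1
    rw [Finset.mem_image] at this
    obtain ⟨x, hx, hx2⟩ := this
    exact ⟨x, Finset.mem_filter.mpr ⟨hx, hx2⟩⟩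
  have h2 : ((F.filter (fun x => x.1 = (F.image Prod.fst).min' h1)).image Prod.snd).Nonempty :=
    hG.image _
  have hb0mem := ((F.filter (fun x => x.1 = (F.image Prod.fst).min' h1)).image Prod.snd).max'_mem h2
  rw [Finset.mem_image] at hb0mem
  obtain ⟨x, hx, hx2⟩ := hb0mem
  rw [Finset.mem_filter] at hx
  refine ⟨x, hx.1, ?_, ?_⟩
  · intro y hy
    rw [hx.2]
    exact (F.image Prod.fst).min'_le _ (Finset.mem_image_of_mem _ hy)
  · intro y hy hy1
    rw [hx2]
    exact Finset.le_max' _ _ (Finset.mem_image_of_mem _ (Finset.mem_filter.mpr ⟨hy, by rw [hy1, hx.2]⟩))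

lemma lam_split {F : Finset (ℕ × ℕ)} (hlam : Lam F) {z : ℕ × ℕ} (hz : z ∈ F)
    (hmin : ∀ x ∈ F, z.1 ≤ x.1) (hmax : ∀ x ∈ F, x.1 = z.1 → x.2 ≤ z.2)
    (hlt : ∀ x ∈ F, x.1 < x.2) :
    ∀ x ∈ F, x.2 ≤ z.2 ∨ z.2 ≤ x.1 := by
  intro x hx
  have h1 := hmin x hx
  have h2 := hlt x hx
  have h3 := hlt z hz
  rcases hlam x hx z hz with h | h | h | h
  · left; omega
  · right; omega
  · have : x.1 = z.1 := le_antisymm h.1 h1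
    exact Or.inl (hmax x hx this)
  · left; exact h.2

lemma lemB : ∀ (w lo hi : ℕ), hi ≤ lo + w → ∀ F : Finset (ℕ × ℕ), Lam F →
    (∀ x ∈ F, lo ≤ x.1 ∧ x.1 + 2 ≤ x.2 ∧ x.2 ≤ hi) → F.card ≤ hi - lo - 1 := by
  intro w
  induction w using Nat.strong_induction_on with
  | _ w ih =>
  intro lo hi hw F hlam hbd
  rcases F.eq_empty_or_nonempty with rfl | hne
  · simp
  obtain ⟨z, hz, hmin, hmax⟩ := exists_leftmax F hne
  have hlt : ∀ x ∈ F, x.1 < x.2 := fun x hx => by have := hbd x hx; omega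
  have hsplit := lam_split hlam hz hmin hmax hlt
  obtain ⟨hbz1, hbz2, hbz3⟩ := hbd z hz
  by_cases hfull : z.1 = lo ∧ z.2 = hi
  · -- full interval case
    set F' := F.erase z with hF'
    have hpos : 0 < F.card := Finset.card_pos.mpr ⟨z, hz⟩
    have hcard : F.card = F'.card + 1 := by
      rw [hF', Finset.card_erase_of_mem hz]; omega
    rcases F'.eq_empty_or_nonempty with h' | hne'
    · rw [h'] at hcard; simp at hcard; omega
    obtain ⟨z', hz', hmin', hmax'⟩ := exists_leftmax F' hne'
    have hsub' : F' ⊆ F := Finset.erase_subset _ _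
    have hlam' : Lam F' := lam_subset hsub' hlam
    have hzz : z' ≠ z := Finset.ne_of_mem_erase hz'
    have hz'F : z' ∈ F := hsub' hz'
    have hbz' := hbd z' hz'F
    have hlt' : ∀ x ∈ F', x.1 < x.2 := fun x hx => hlt x (hsub' hx)
    have hsplit' := lam_split hlam' hz' hmin' hmax' hlt'
    have hnf : z'.1 ≠ lo ∨ z'.2 ≠ hi := by
      by_contra hc
      push_neg at hc
      exact hzz (Prod.ext (by rw [hc.1, hfull.1]) (by rw [hc.2, hfull.2]))
    obtain ⟨hbz'1, hbz'2, hbz'3⟩ := hbz' 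
    set F1 := F'.filter (fun x => x.2 ≤ z'.2) with hF1
    set F2 := F'.filter (fun x => ¬ (x.2 ≤ z'.2)) with hF2
    have hc12 : F1.card + F2.card = F'.card :=
      Finset.card_filter_add_card_filter_not _
    have h1 : F1.card ≤ z'.2 - z'.1 - 1 := by
      refine ih (z'.2 - z'.1) (by omega) z'.1 z'.2 (by omega) F1
        (lam_subset (Finset.filter_subset _ _) hlam') ?_
      intro x hx
      rw [hF1, Finset.mem_filter] at hx
      have := hbd x (hsub' hx.1)
      have := hmin' x hx.1
      exact ⟨by omega, by omega, hx.2⟩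
    have h2 : F2.card ≤ hi - z'.2 - 1 := by
      refine ih (hi - z'.2) (by omega) z'.2 hi (by omega) F2
        (lam_subset (Finset.filter_subset _ _) hlam') ?_
      intro x hx
      rw [hF2, Finset.mem_filter] at hx
      have hb := hbd x (hsub' hx.1)
      rcases hsplit' x hx.1 with h | h
      · exact absurd h hx.2
      · exact ⟨h, by omega, by omega⟩
    omega
  · have hnf : z.1 ≠ lo ∨ z.2 ≠ hi := not_and_or.mp hfull
    set F1 := F.filter (fun x => x.2 ≤ z.2) with hF1
    set F2 := F.filter (fun x => ¬ (x.2 ≤ z.2)) with hF2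
    have hc12 : F1.card + F2.card = F.card :=
      Finset.card_filter_add_card_filter_not _
    have h1 : F1.card ≤ z.2 - z.1 - 1 := by
      refine ih (z.2 - z.1) (by omega) z.1 z.2 (by omega) F1
        (lam_subset (Finset.filter_subset _ _) hlam) ?_
      intro x hx
      rw [hF1, Finset.mem_filter] at hx
      have := hbd x hx.1
      have := hmin x hx.1
      exact ⟨by omega, by omega, hx.2⟩
    have h2 : F2.card ≤ hi - z.2 - 1 := by
      refine ih (hi - z.2) (by omega) z.2 hi (by omega) F2
        (lam_subset (Finset.filter_subset _ _) hlam) ?_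
      intro x hx
      rw [hF2, Finset.mem_filter] at hx
      have hb := hbd x hx.1
      rcases hsplit x hx.1 with h | h
      · exact absurd h hx.2
      · exact ⟨h, by omega, by omega⟩
    omega

lemma mul_step : ∀ u L : ℕ, u ≤ L → (u - 1) * L ≤ u * (L - 1) := by
  intro u L h
  match u, L with
  | 0, L => simp
  | u+1, 0 => omega
  | u+1, L+1 =>
    have h' : u ≤ L := by omega
    have e1 : (u + 1 - 1) * (L + 1) = u * L + u := by simp; ring
    have e2 : (u + 1) * (L + 1 - 1) = u * L + L := by simp [Nat.succ_sub_one]; ring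
    rw [e1, e2]
    exact Nat.add_le_add_left h' _

lemma lemC : ∀ (w lo hi L : ℕ), hi ≤ lo + w → ∀ F : Finset (ℕ × ℕ), Lam F →
    (∀ x ∈ F, lo ≤ x.1 ∧ x.1 + 2 ≤ x.2 ∧ x.2 ≤ hi ∧ x.2 - x.1 ≤ L) →
    F.card * L ≤ (hi - lo) * (L - 1) := by
  intro w
  induction w using Nat.strong_induction_on with
  | _ w ih =>
  intro lo hi L hw F hlam hbd
  rcases F.eq_empty_or_nonempty with rfl | hne
  · simp
  obtain ⟨z, hz, hmin, hmax⟩ := exists_leftmax F hne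
  have hlt : ∀ x ∈ F, x.1 < x.2 := fun x hx => by have := hbd x hx; omega
  have hsplit := lam_split hlam hz hmin hmax hlt
  obtain ⟨hbz1, hbz2, hbz3, hbz4⟩ := hbd z hz
  set F1 := F.filter (fun x => x.2 ≤ z.2) with hF1
  set F2 := F.filter (fun x => ¬ (x.2 ≤ z.2)) with hF2
  have hc12 : F1.card + F2.card = F.card :=
    Finset.card_filter_add_card_filter_not _
  have h1 : F1.card ≤ z.2 - z.1 - 1 := by
    refine lemB (z.2 - z.1) z.1 z.2 (by omega) F1
      (lam_subset (Finset.filter_subset _ _) hlam) ?_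
    intro x hx
    rw [hF1, Finset.mem_filter] at hx
    have := hbd x hx.1
    have := hmin x hx.1
    exact ⟨by omega, by omega, hx.2⟩
  have h2 : F2.card * L ≤ (hi - z.2) * (L - 1) := by
    refine ih (hi - z.2) (by omega) z.2 hi L (by omega) F2
      (lam_subset (Finset.filter_subset _ _) hlam) ?_
    intro x hx
    rw [hF2, Finset.mem_filter] at hx
    have hb := hbd x hx.1
    rcases hsplit x hx.1 with h | h
    · exact absurd h hx.2
    · exact ⟨h, by omega, by omega, by omega⟩
  have h1' : F1.card * L ≤ (z.2 - z.1) * (L - 1) :=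
    le_trans (Nat.mul_le_mul_right L h1) (mul_step _ L hbz4)
  have hsum : (z.2 - z.1) + (hi - z.2) ≤ hi - lo := by omega
  calc F.card * L = F1.card * L + F2.card * L := by rw [← hc12]; ring
  _ ≤ (z.2 - z.1) * (L - 1) + (hi - z.2) * (L - 1) := Nat.add_le_add h1' h2
  _ = ((z.2 - z.1) + (hi - z.2)) * (L - 1) := by ring
  _ ≤ (hi - lo) * (L - 1) := Nat.mul_le_mul_right _ hsum

/-- The length of the short side of a chord. -/
def Sh (n m : ℕ) (e : ℕ × ℕ) : ℕ := if e.2 - e.1 < m then e.2 - e.1 else n - (e.2 - e.1)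

/-- The starting vertex of the short arc of a chord. -/
def Xs (m : ℕ) (e : ℕ × ℕ) : ℕ := if e.2 - e.1 < m then e.1 else e.2

/-- Rotated starting vertex. -/
def Rt (n m v : ℕ) (e : ℕ × ℕ) : ℕ :=
  if v ≤ Xs m e then Xs m e - v else Xs m e + n - v

def gmap (n m v : ℕ) (e : ℕ × ℕ) : ℕ × ℕ := (Rt n m v e, Rt n m v e + Sh n m e)

lemma Sh_char (n m : ℕ) (e : ℕ × ℕ) :
    (e.2 - e.1 < m ∧ Sh n m e = e.2 - e.1 ∧ Xs m e = e.1) ∨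
    (¬ (e.2 - e.1 < m) ∧ Sh n m e = n - (e.2 - e.1) ∧ Xs m e = e.2) := by
  by_cases h : e.2 - e.1 < m <;> simp [Sh, Xs, h]

lemma Rt_char (n m v : ℕ) (e : ℕ × ℕ) :
    (v ≤ Xs m e ∧ Rt n m v e = Xs m e - v) ∨
    (¬ (v ≤ Xs m e) ∧ Rt n m v e = Xs m e + n - v) := by
  by_cases h : v ≤ Xs m e <;> simp [Rt, h]


set_option maxHeartbeats 2000000 in
/-- In any triangulation of an `n`-gon, `n ≥ 4`, some chord cuts the boundary cycle into
two arcs each of length at least `⌈n/3⌉`; the two arc lengths `e.2 - e.1` and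
`n - (e.2 - e.1)` sum to `n`. -/
theorem stmt_2 (n : ℕ) (hn : 4 ≤ n) (T : Finset (ℕ × ℕ)) (hT : IsTriangulation n T) :
    ∃ e ∈ T, (n + 2) / 3 ≤ e.2 - e.1 ∧ (n + 2) / 3 ≤ n - (e.2 - e.1) := by
  obtain ⟨hch, hnc, hcard⟩ := hT
  have hm3 : 3 * ((n + 2) / 3) ≤ n + 2 ∧ n + 2 < 3 * ((n + 2) / 3) + 3 := by
    have := Nat.div_add_mod (n + 2) 3
    have := Nat.mod_lt (n + 2) (show 0 < 3 by norm_num)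
    omega
  set m := (n + 2) / 3 with hm
  clear_value m
  by_contra hcon
  push_neg at hcon
  have hTne : T.Nonempty := by rw [← Finset.card_pos, hcard]; omega
  by_cases hn7 : n ≤ 6
  · obtain ⟨e, he⟩ := hTne
    obtain ⟨h1, h2, h3, h4⟩ := hch e he
    have := hcon e he (by omega)
    omega
  push_neg at hn7
  have hm2 : 3 ≤ m := by omega
  have hsb : ∀ e ∈ T, e.2 - e.1 < m ∨ n - (e.2 - e.1) < m := by
    intro e he
    by_cases h : m ≤ e.2 - e.1
    · exact Or.inr (hcon e he h)
    · exact Or.inl (by omega)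
  obtain ⟨e0, he0, hmax⟩ := T.exists_max_image (Sh n m) hTne
  set v := Xs m e0 with hv
  clear_value v
  -- nowrap and size bounds
  have key : ∀ e ∈ T, Rt n m v e + Sh n m e ≤ n ∧ 2 ≤ Sh n m e ∧ Sh n m e ≤ m - 1 := by
    intro e he
    obtain ⟨hc1, hc2, hc3, hc4⟩ := hch e he
    obtain ⟨hd1, hd2, hd3, hd4⟩ := hch e0 he0
    have hx1 := hnc e0 he0 e he
    have hx2 := hnc e he e0 he0
    simp only [Crosses] at hx1 hx2
    have hlin : e0.2 ≤ e.1 ∨ e.2 ≤ e0.1 ∨ (e0.1 ≤ e.1 ∧ e.2 ≤ e0.2) ∨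
        (e.1 ≤ e0.1 ∧ e0.2 ≤ e.2) := by omega
    clear hx1 hx2
    have hme := hmax e he
    have hse := hsb e he
    have hs0 := hsb e0 he0
    have hchS := Sh_char n m e
    have hchS0 := Sh_char n m e0
    have hchR := Rt_char n m v e
    rw [← hv] at hchS0
    omega
  have hinj : ∀ e ∈ T, ∀ f ∈ T, gmap n m v e = gmap n m v f → e = f := by
    intro e he f hf hgef
    simp only [gmap, Prod.mk.injEq] at hgef
    obtain ⟨hc1, hc2, hc3, hc4⟩ := hch e he
    obtain ⟨hd1, hd2, hd3, hd4⟩ := hch f hf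
    have hse := hsb e he
    have hsf := hsb f hf
    have hchS := Sh_char n m e
    have hchSf := Sh_char n m f
    have hchR := Rt_char n m v e
    have hchRf := Rt_char n m v f
    obtain ⟨he1, he2, he3, he4⟩ := hch e0 he0
    have hchS0 := Sh_char n m e0
    rw [← hv] at hchS0
    have hkey := key e he
    have hkeyf := key f hf
    have h1 : e.1 = f.1 ∧ e.2 = f.2 := by omega
    exact Prod.ext h1.1 h1.2
  have hvlt : v < n := by
    have hchS0 := Sh_char n m e0
    rw [← hv] at hchS0
    obtain ⟨he1, he2, he3, he4⟩ := hch e0 he0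
    omega
  have hlamT : Lam (T.image (gmap n m v)) := by
    intro x hx y hy
    rw [Finset.mem_image] at hx hy
    obtain ⟨e, he, rfl⟩ := hx
    obtain ⟨f, hf, rfl⟩ := hy
    simp only [gmap]
    obtain ⟨hc1, hc2, hc3, hc4⟩ := hch e he
    obtain ⟨hd1, hd2, hd3, hd4⟩ := hch f hf
    have hx1 := hnc e he f hf
    have hx2 := hnc f hf e he
    simp only [Crosses] at hx1 hx2
    have hlin : e.2 ≤ f.1 ∨ f.2 ≤ e.1 ∨ (e.1 ≤ f.1 ∧ f.2 ≤ e.2) ∨ (f.1 ≤ e.1 ∧ e.2 ≤ f.2) := by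
      omega
    clear hx1 hx2
    have hkey := key e he
    have hkeyf := key f hf
    rcases Sh_char n m e with ⟨hp1, hp2, hp3⟩ | ⟨hp1, hp2, hp3⟩ <;>
      rcases Sh_char n m f with ⟨hq1, hq2, hq3⟩ | ⟨hq1, hq2, hq3⟩ <;>
      rcases Rt_char n m v e with ⟨hr1, hr2⟩ | ⟨hr1, hr2⟩ <;>
      rcases Rt_char n m v f with ⟨hs1, hs2⟩ | ⟨hs1, hs2⟩ <;>
      omega
  have hbounds : ∀ x ∈ T.image (gmap n m v),
      0 ≤ x.1 ∧ x.1 + 2 ≤ x.2 ∧ x.2 ≤ n ∧ x.2 - x.1 ≤ m - 1 := by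
    intro x hx
    rw [Finset.mem_image] at hx
    obtain ⟨e, he, rfl⟩ := hx
    have hkey := key e he
    simp only [gmap]
    omega
  have hC := lemC n 0 n (m - 1) (by omega) (T.image (gmap n m v)) hlamT
    (fun x hx => hbounds x hx)
  have hcardim : (T.image (gmap n m v)).card = T.card :=
    Finset.card_image_of_injOn (fun e he f hf h => hinj e he f hf h)
  rw [hcardim, hcard] at hC
  -- (n - 3) * (m - 1) ≤ (n - 0) * (m - 1 - 1)  is contradictory
  obtain ⟨N, rfl⟩ : ∃ N, n = N + 7 := ⟨n - 7, by omega⟩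
  obtain ⟨M, hM⟩ : ∃ M, m = M + 3 := ⟨m - 3, by omega⟩
  rw [hM] at hC hm3
  have hq1 : (N + 7 - 3) * (M + 3 - 1) = N * M + (2 * N + 4 * M + 8) := by
    simp only [show N + 7 - 3 = N + 4 from rfl, show M + 3 - 1 = M + 2 from rfl]; ring
  have hq2 : (N + 7 - 0) * (M + 3 - 1 - 1) = N * M + (N + 7 * M + 7) := by
    simp only [show N + 7 - 0 = N + 7 from rfl, show M + 3 - 1 - 1 = M + 1 from rfl]; ring
  rw [hq1, hq2] at hC
  have := Nat.le_of_add_le_add_left (a := N * M) hC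
  omega
end

section
/- Let G = H *_F K be a free product of groups H and K amalgamated over a subgroup F of both. Let S_H be a symmetric generating set of H containing every element of the copy of F in H, let S_K be a symmetric generating set of K containing every element of the copy of F in K, and set S_G = S_H ∪ S_K. Then the inclusion H → G is an isometric embedding: for all h₁, h₂ ∈ H, d_{S_H}(h₁,h₂) = d_{S_G}(h₁,h₂). -/
/-- The word metric on `G` with respect to a generating set `S`. -/
noncomputable def wordDist {G : Type*} [Group G] (S : Set G) (g h : G) : ℕ :=
  sInf {k : ℕ | ∃ l : List G, l.length = k ∧ (∀ x ∈ l, x ∈ S) ∧ l.prod = g⁻¹ * h}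

open Monoid PushoutI

/-!
Read a word over `S_G` representing `x ∈ H` as a list of syllables: elements of `H` or `K`,
each paid for by a number of letters. Three moves shorten the list and keep its product and
its total cost: a first syllable lying in `H` or in `F` is absorbed into `x`; two adjacent
syllables from the same factor are multiplied; a syllable lying in `F` is rewritten in the
factor of its left neighbour and multiplied into it. Because `S_H` and `S_K` both contain `F`,
an element of `F` costs the same in either factor, so rewriting it is free. If no move
applies, the syllables form a nonempty reduced word whose first syllable does not come from
`H`, and by the normal form theorem such a word does not represent an element of `H`. So the
moves use up the whole list, and `x` becomes a product of as many letters of `S_H` as the word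
had.
-/

section WordLength

variable {M N : Type*} [Monoid M] [Monoid N]

def HasWordOfLength (S : Set M) (g : M) (n : ℕ) : Prop :=
  ∃ l : List M, l.length = n ∧ (∀ x ∈ l, x ∈ S) ∧ l.prod = g

theorem wordDist_eq_sInf {G : Type*} [Group G] (S : Set G) (g h : G) :
    wordDist S g h = sInf {n | HasWordOfLength S (g⁻¹ * h) n} := rfl

namespace HasWordOfLength

variable {S T : Set M} {g h : M} {m n : ℕ}

theorem one (S : Set M) : HasWordOfLength S 1 0 := ⟨[], rfl, by simp, rfl⟩

theorem zero_iff : HasWordOfLength S g 0 ↔ g = 1 :=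
  ⟨fun ⟨l, hl, _, hg⟩ => by rw [← hg, List.length_eq_zero_iff.mp hl, List.prod_nil],
    fun hg => hg ▸ one S⟩

theorem singleton (hg : g ∈ S) : HasWordOfLength S g 1 := ⟨[g], rfl, by simpa, by simp⟩

theorem mul (hg : HasWordOfLength S g m) (hh : HasWordOfLength S h n) :
    HasWordOfLength S (g * h) (m + n) := by
  obtain ⟨l, rfl, hlS, rfl⟩ := hg
  obtain ⟨l', rfl, hl'S, rfl⟩ := hh
  exact ⟨l ++ l', List.length_append, by simpa [or_imp, forall_and] using ⟨hlS, hl'S⟩,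
    List.prod_append⟩

theorem mono (hST : S ⊆ T) (hg : HasWordOfLength S g n) : HasWordOfLength T g n :=
  let ⟨l, hl, hlS, hg⟩ := hg
  ⟨l, hl, fun x hx => hST (hlS x hx), hg⟩

theorem map (f : M →* N) (hg : HasWordOfLength S g n) : HasWordOfLength (f '' S) (f g) n := by
  obtain ⟨l, rfl, hlS, rfl⟩ := hg
  exact ⟨l.map f, List.length_map _, by simpa using fun x hx => ⟨x, hlS x hx, rfl⟩,
    (map_list_prod f l).symm⟩

theorem of_mem (hg : g ∈ S) (hS : 1 ∈ S) (hn : n ≠ 0) : HasWordOfLength S g n := by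
  obtain ⟨m, rfl⟩ := Nat.exists_eq_add_one_of_ne_zero hn
  refine ⟨g :: List.replicate m 1, by simp, ?_, by simp⟩
  simpa [List.mem_replicate] using ⟨hg, fun _ => hS⟩

end HasWordOfLength

end WordLength

namespace Monoid.PushoutI

variable {ι : Type*} {G : ι → Type*} [∀ i, Group (G i)] {H : Type*} [Group H]
  {φ : ∀ i, H →* G i}

theorem eq_nil_of_prod_mem_range_base (hφ : ∀ i, Function.Injective (φ i))
    {l : List ((i : ι) × G i)} (hchain : l.IsChain fun p q => p.1 ≠ q.1)
    (hred : ∀ p ∈ l, p.2 ∉ (φ p.1).range)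
    (hmem : (l.map fun p => of (φ := φ) p.1 p.2).prod ∈ (base φ).range) : l = [] := by
  let w : CoprodI.Word G := ⟨l, fun p hp h1 => hred p hp (h1 ▸ one_mem _), hchain⟩
  have hw : w = .empty := Reduced.eq_empty_of_mem_range hφ hred <| by
    simpa [w, CoprodI.Word.prod, map_list_prod, Function.comp_def] using hmem
  exact congrArg CoprodI.Word.toList hw

theorem prod_ne_of_of_isChain (hφ : ∀ i, Function.Injective (φ i))
    {l : List ((i : ι) × G i)} {j : ι} (x : G j)
    (hchain : l.IsChain fun p q => p.1 ≠ q.1) (hred : ∀ p ∈ l, p.2 ∉ (φ p.1).range)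
    (hne : l ≠ []) (hhead : ∀ p ∈ l.head?, p.1 ≠ j) :
    (l.map fun p => of (φ := φ) p.1 p.2).prod ≠ of j x := by
  intro hx
  by_cases hxφ : x ∈ (φ j).range
  · obtain ⟨f, rfl⟩ := hxφ
    exact hne (eq_nil_of_prod_mem_range_base hφ hchain hred
      ⟨f, by rw [hx, of_apply_eq_base]⟩)
  · -- prepending `x⁻¹` yields a reduced word with trivial product
    refine List.cons_ne_nil ⟨j, x⁻¹⟩ l (eq_nil_of_prod_mem_range_base hφ ?_ ?_ ⟨1, ?_⟩)
    · exact List.isChain_cons.mpr ⟨fun p hp => (hhead p hp).symm, hchain⟩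
    · exact List.forall_mem_cons.mpr ⟨by simpa [inv_mem_iff] using hxφ, hred⟩
    · simp [hx]

structure Syllable (G : ι → Type*) where
  idx : ι
  val : G idx
  wt : ℕ

variable (φ) in
def syllableProd (w : List (Syllable G)) : PushoutI φ :=
  (w.map fun p => of p.idx p.val).prod

def totalWeight (w : List (Syllable G)) : ℕ := (w.map Syllable.wt).sum

theorem syllableProd_ne_of_isChain (hφ : ∀ i, Function.Injective (φ i)) {p : Syllable G}
    {w : List (Syllable G)} {j : ι} (x : G j) (hpj : p.idx ≠ j)
    (hp : p.val ∉ (φ p.idx).range)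
    (hchain : (p :: w).IsChain fun q r => q.idx ≠ r.idx ∧ r.val ∉ (φ r.idx).range) :
    syllableProd φ (p :: w) ≠ of j x := by
  have hred : ∀ q ∈ p :: w, q.val ∉ (φ q.idx).range :=
    hchain.induction _ _ (fun _ _ hqr _ => hqr.2) fun _ => hp
  simpa [syllableProd, List.map_map, Function.comp_def] using
    prod_ne_of_of_isChain (l := (p :: w).map fun q => ⟨q.idx, q.val⟩) hφ x
      ((List.isChain_map _).mpr (hchain.imp fun _ _ h => h.1)) (by simpa using hred)
      (by simp) (by simpa using hpj)

variable (φ) in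
/-- `W i g n` reads "`g` can be paid for with `n` letters in the factor `G i`". -/
structure CompatibleWeights (W : ∀ i, G i → ℕ → Prop) : Prop where
  one : ∀ i, W i 1 0
  mul : ∀ {i g h m n}, W i g m → W i h n → W i (g * h) (m + n)
  base : ∀ {i j f n}, W i (φ i f) n → W j (φ j f) n

namespace CompatibleWeights

variable {W : ∀ i, G i → ℕ → Prop}

theorem exists_reindex (hW : CompatibleWeights φ W) {p : Syllable G}
    (hp : W p.idx p.val p.wt) {j : ι} (hpj : p.idx = j ∨ p.val ∈ (φ p.idx).range) :
    ∃ y : G j, of (φ := φ) p.idx p.val = of j y ∧ W j y p.wt := by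
  obtain ⟨i, g, n⟩ := p
  dsimp only at hp hpj ⊢
  rcases hpj with rfl | ⟨f, hf⟩
  · exact ⟨g, rfl, hp⟩
  · rw [← hf] at hp ⊢
    exact ⟨φ j f, by simp only [of_apply_eq_base], hW.base hp⟩

theorem exists_merge (hW : CompatibleWeights φ W) {p q : Syllable G}
    (hp : W p.idx p.val p.wt) (hq : W q.idx q.val q.wt)
    (hpq : p.idx = q.idx ∨ q.val ∈ (φ q.idx).range) :
    ∃ r : Syllable G, W r.idx r.val r.wt ∧
      of (φ := φ) r.idx r.val = of p.idx p.val * of q.idx q.val ∧ r.wt = p.wt + q.wt := by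
  obtain ⟨i, g, m⟩ := p
  obtain ⟨k, h, n⟩ := q
  dsimp only at hp hq hpq ⊢
  rcases hpq with rfl | ⟨f, hf⟩
  · exact ⟨⟨i, g * h, m + n⟩, hW.mul hp hq, map_mul _ _ _, rfl⟩
  · rw [← hf] at hq ⊢
    refine ⟨⟨i, g * φ i f, m + n⟩, hW.mul hp (hW.base hq), ?_, rfl⟩
    simp only [map_mul, of_apply_eq_base]

theorem of_syllableProd_eq_of (hW : CompatibleWeights φ W) (hφ : ∀ i, Function.Injective (φ i))
    {j : ι} (w : List (Syllable G)) (x : G j) (hw : ∀ p ∈ w, W p.idx p.val p.wt)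
    (hx : syllableProd φ w = of j x) : W j x (totalWeight w) := by
  match w, hw, hx with
  | [], _, hx =>
    obtain rfl : x = 1 := of_injective hφ j (by simpa [syllableProd] using hx.symm)
    exact hW.one j
  | p :: w, hw, hx =>
    by_cases hpj : p.idx = j ∨ p.val ∈ (φ p.idx).range
    · obtain ⟨y, hpy, hy⟩ := hW.exists_reindex (hw p List.mem_cons_self) hpj
      have hw' : syllableProd φ w = of j (y⁻¹ * x) := by
        rw [map_mul, map_inv, ← hx, ← hpy]
        simp [syllableProd]
      have := hW.mul hy (hW.of_syllableProd_eq_of hφ w _ (fun q hq => hw q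
        (List.mem_cons_of_mem p hq)) hw')
      rwa [mul_inv_cancel_left] at this
    push Not at hpj
    by_cases hchain : (p :: w).IsChain fun q r => q.idx ≠ r.idx ∧ r.val ∉ (φ r.idx).range
    · exact absurd hx (syllableProd_ne_of_isChain hφ x hpj.1 hpj.2 hchain)
    rw [List.isChain_iff_forall_rel_of_append_cons_cons] at hchain
    push Not at hchain
    obtain ⟨q, r, a, b, hsplit, hqr⟩ := hchain
    rw [hsplit] at hw hx ⊢
    obtain ⟨s, hs, hsqr, hswt⟩ := hW.exists_merge (hw q (by simp)) (hw r (by simp))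
      (or_iff_not_imp_left.mpr hqr)
    have := hW.of_syllableProd_eq_of hφ (a ++ s :: b) x
      (by simp_all [or_imp, forall_and])
      (by simpa [syllableProd, hsqr, mul_assoc] using hx)
    simpa [totalWeight, hswt, add_assoc] using this
termination_by w.length
decreasing_by
  · simp
  · rw [hsplit]; simp

end CompatibleWeights

variable {S : ∀ i, Set (G i)}

theorem compatibleWeights_hasWordOfLength (hφ : ∀ i, Function.Injective (φ i))
    (hS : ∀ i, Set.range (φ i) ⊆ S i) :
    CompatibleWeights φ fun i => HasWordOfLength (S i) where
  one _ := .one _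
  mul := .mul
  base {i j f n} hf := by
    rcases eq_or_ne n 0 with rfl | hn
    · rw [HasWordOfLength.zero_iff, map_eq_one_iff _ (hφ i)] at hf
      rw [hf, map_one]
      exact .one _
    · exact .of_mem (hS j ⟨f, rfl⟩) (hS j ⟨1, map_one _⟩) hn

theorem exists_syllables_of_forall_mem_iUnion (l : List (PushoutI φ))
    (hl : ∀ y ∈ l, y ∈ ⋃ i, of i '' S i) :
    ∃ w : List (Syllable G), (∀ p ∈ w, HasWordOfLength (S p.idx) p.val p.wt) ∧
      syllableProd φ w = l.prod ∧ totalWeight w = l.length := by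
  induction l with
  | nil => exact ⟨[], by simp, rfl, rfl⟩
  | cons y l ih =>
    obtain ⟨w, hw, hwprod, hwlen⟩ := ih fun z hz => hl z (List.mem_cons_of_mem y hz)
    obtain ⟨i, s, hs, rfl⟩ := Set.mem_iUnion.mp (hl _ List.mem_cons_self)
    refine ⟨⟨i, s, 1⟩ :: w, List.forall_mem_cons.mpr ⟨.singleton hs, hw⟩, ?_, ?_⟩
    · simp [syllableProd, ← hwprod]
    · simp [totalWeight, ← hwlen, add_comm]

theorem hasWordOfLength_iUnion_image_of_iff (hφ : ∀ i, Function.Injective (φ i))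
    (hS : ∀ i, Set.range (φ i) ⊆ S i) {j : ι} {x : G j} {n : ℕ} :
    HasWordOfLength (⋃ i, of (φ := φ) i '' S i) (of j x) n ↔ HasWordOfLength (S j) x n := by
  refine ⟨fun ⟨l, hl, hlS, hprod⟩ => ?_, fun h =>
    (h.map (of j)).mono (Set.subset_iUnion (fun i => of (φ := φ) i '' S i) j)⟩
  obtain ⟨w, hw, hwprod, hwlen⟩ := exists_syllables_of_forall_mem_iUnion l hlS
  exact hl ▸ hwlen ▸ (compatibleWeights_hasWordOfLength hφ hS).of_syllableProd_eq_of hφ w x hw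
    (hwprod.trans hprod)

theorem wordDist_iUnion_image_of (hφ : ∀ i, Function.Injective (φ i))
    (hS : ∀ i, Set.range (φ i) ⊆ S i) (j : ι) (g h : G j) :
    wordDist (⋃ i, of (φ := φ) i '' S i) (of j g) (of j h) = wordDist (S j) g h := by
  simp only [wordDist_eq_sInf, ← map_inv, ← map_mul, hasWordOfLength_iUnion_image_of_iff hφ hS]

end Monoid.PushoutI

/-- `Hfam true` plays the role of `H`, `Hfam false` the role of `K`, and `Monoid.PushoutI φ`
(with both `φ i` injective) is the amalgamated free product `G = H *_F K`. -/
theorem stmt_6_general {F : Type*} [Group F] {Hfam : Bool → Type*} [∀ i, Group (Hfam i)]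
    (φ : ∀ i, F →* Hfam i) (hφ : ∀ i, Function.Injective (φ i))
    (SH : Set (Hfam true)) (SK : Set (Hfam false))
    (hSHF : Set.range (φ true) ⊆ SH) (hSKF : Set.range (φ false) ⊆ SK)
    (h₁ h₂ : Hfam true) :
    wordDist SH h₁ h₂ =
      wordDist ((of (φ := φ) true '' SH) ∪ (of (φ := φ) false '' SK))
        (of (φ := φ) true h₁) (of (φ := φ) true h₂) := by
  let S : ∀ b, Set (Hfam b) := fun | true => SH | false => SK
  have hS : ∀ b, Set.range (φ b) ⊆ S b := fun | true => hSHF | false => hSKF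
  have hSG : of true '' SH ∪ of false '' SK = ⋃ b, of (φ := φ) b '' S b :=
    (iSup_bool_eq (f := fun b => of (φ := φ) b '' S b)).symm
  rw [hSG, wordDist_iUnion_image_of hφ hS]

/-- `Hfam true` plays the role of `H`, `Hfam false` the role of `K`, `F` the amalgamated
subgroup, and `Monoid.PushoutI φ` (with both `φ i` injective) is the amalgamated free
product `G = H *_F K`.  If `S_H` generates `H` and contains the copy of `F` in `H`, is
symmetric, and likewise for `S_K`, then `H` is isometrically embedded in `G` with respect
to the word metrics for `S_H` and `S_G = S_H ∪ S_K`. -/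
theorem stmt_6 {F : Type*} [Group F] {Hfam : Bool → Type*} [∀ i, Group (Hfam i)]
    (φ : ∀ i, F →* Hfam i) (hφ : ∀ i, Function.Injective (φ i))
    (SH : Set (Hfam true)) (SK : Set (Hfam false))
    (hSHsymm : ∀ s ∈ SH, s⁻¹ ∈ SH) (hSKsymm : ∀ s ∈ SK, s⁻¹ ∈ SK)
    (hSHgen : Subgroup.closure SH = ⊤) (hSKgen : Subgroup.closure SK = ⊤)
    (hSHF : Set.range (φ true) ⊆ SH) (hSKF : Set.range (φ false) ⊆ SK)
    (h₁ h₂ : Hfam true) :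
    wordDist SH h₁ h₂ =
      wordDist ((of (φ := φ) true '' SH) ∪ (of (φ := φ) false '' SK))
        (of (φ := φ) true h₁) (of (φ := φ) true h₂) :=
  stmt_6_general φ hφ SH SK hSHF hSKF h₁ h₂
end

section
/- Let G be an HNN extension of a group H with stable letter t and associated subgroups A, B ≤ H satisfying t⁻¹At = B. Let S_H be a symmetric generating set of H containing A ∪ B, and set S_G = S_H ∪ {t, t⁻¹}. Then H is isometrically embedded in G: for all h₁, h₂ ∈ H, d_{S_H}(h₁,h₂) = d_{S_G}(h₁,h₂). -/
/-! Any word in `S_G` representing an element of `H` can be read as a syllable word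
`g₀ t^ε₁ g₁ ⋯ t^εₙ gₙ` whose weight `n + ∑ |gᵢ|_{S_H}` is at most its length. By Britton's lemma,
either `n = 0`, and then the weight bounds `|h|_{S_H}`, or the word contains a pinch
`t^ε a t^-ε` with `a` in the associated subgroup. The pinch is an element of `A ∪ B ⊆ S_H`,
so removing it lowers `n` by two without raising the weight, and induction on `n` finishes.
Conversely, every word in `S_H` is a word in `S_G`. -/

open HNNExtension

section WordMetric

variable {G : Type*} [Group G] {S : Set G}

theorem Submonoid.closure_eq_top_of_inv_mem (hinv : ∀ s ∈ S, s⁻¹ ∈ S)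
    (hgen : Subgroup.closure S = ⊤) : Submonoid.closure S = ⊤ := by
  have hS : S ∪ S⁻¹ = S := Set.union_eq_left.mpr fun s hs => by simpa using hinv _ hs
  rw [← hS, ← Subgroup.closure_toSubmonoid, hgen, Subgroup.top_toSubmonoid]

theorem wordDist_eq_wordDist_one_inv_mul (S : Set G) (g h : G) :
    wordDist S g h = wordDist S 1 (g⁻¹ * h) := by
  simp [wordDist]

theorem wordDist_le_length {g h : G} {l : List G} (hl : ∀ x ∈ l, x ∈ S)
    (hprod : l.prod = g⁻¹ * h) : wordDist S g h ≤ l.length :=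
  Nat.sInf_le ⟨l, rfl, hl, hprod⟩

theorem le_wordDist {g h : G} {n : ℕ}
    (hne : ∃ l : List G, (∀ x ∈ l, x ∈ S) ∧ l.prod = g⁻¹ * h)
    (hle : ∀ l : List G, (∀ x ∈ l, x ∈ S) → l.prod = g⁻¹ * h → n ≤ l.length) :
    n ≤ wordDist S g h := by
  obtain ⟨l, hl, hprod⟩ := hne
  refine le_csInf ⟨l.length, l, rfl, hl, hprod⟩ ?_
  rintro _ ⟨l', rfl, hl', hprod'⟩
  exact hle l' hl' hprod'

theorem exists_list_length_eq_wordDist (hS : Submonoid.closure S = ⊤) (g h : G) :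
    ∃ l : List G, (∀ x ∈ l, x ∈ S) ∧ l.prod = g⁻¹ * h ∧ l.length = wordDist S g h := by
  obtain ⟨l, hl, hprod⟩ :=
    Submonoid.exists_list_of_mem_closure (hS ▸ Submonoid.mem_top (g⁻¹ * h))
  have hne : {k : ℕ | ∃ l : List G, l.length = k ∧ (∀ x ∈ l, x ∈ S) ∧
      l.prod = g⁻¹ * h}.Nonempty := ⟨l.length, l, rfl, hl, hprod⟩
  obtain ⟨l', hlen, hl', hprod'⟩ := Nat.sInf_mem hne
  exact ⟨l', hl', hprod', hlen⟩

theorem wordDist_self (g : G) : wordDist S g g = 0 :=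
  Nat.le_zero.mp (wordDist_le_length (l := []) (by simp) (by simp))

theorem wordDist_one_le_one {s : G} (hs : s ∈ S) : wordDist S 1 s ≤ 1 :=
  wordDist_le_length (l := [s]) (by simpa) (by simp)

theorem wordDist_one_mul_le (hS : Submonoid.closure S = ⊤) (g h : G) :
    wordDist S 1 (g * h) ≤ wordDist S 1 g + wordDist S 1 h := by
  obtain ⟨l₁, hl₁, hprod₁, hlen₁⟩ := exists_list_length_eq_wordDist hS 1 g
  obtain ⟨l₂, hl₂, hprod₂, hlen₂⟩ := exists_list_length_eq_wordDist hS 1 h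
  rw [← hlen₁, ← hlen₂, ← List.length_append]
  refine wordDist_le_length (fun x hx => ?_) (by simp [hprod₁, hprod₂])
  exact (List.mem_append.mp hx).elim (hl₁ x) (hl₂ x)

theorem wordDist_eq_wordDist_map {K : Type*} [Group K] (f : G →* K) {T : Set K}
    (hS : Submonoid.closure S = ⊤) (hST : f '' S ⊆ T)
    (hT : ∀ (l : List K) (g : G), (∀ x ∈ l, x ∈ T) → l.prod = f g → wordDist S 1 g ≤ l.length)
    (g h : G) : wordDist S g h = wordDist T (f g) (f h) := by
  obtain ⟨l, hl, hprod, hlen⟩ := exists_list_length_eq_wordDist hS g h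
  have hlT : ∀ x ∈ l.map f, x ∈ T := by
    simpa using fun x hx => hST ⟨x, hl x hx, rfl⟩
  have hprodT : (l.map f).prod = (f g)⁻¹ * f h := by
    rw [← map_list_prod, hprod, map_mul, map_inv]
  refine le_antisymm ?_ (hlen ▸ l.length_map f ▸ wordDist_le_length hlT hprodT)
  refine le_wordDist ⟨_, hlT, hprodT⟩ fun l' hl' hprod' => ?_
  rw [wordDist_eq_wordDist_one_inv_mul]
  exact hT l' _ hl' (by rw [hprod', map_mul, map_inv])

end WordMetric

namespace HNNExtension

variable {H : Type*} [Group H] {A B : Subgroup H} (φ : A ≃* B) {S : Set H}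

def syllableProd : H → List (ℤˣ × H) → HNNExtension H A B φ
  | g, [] => of g
  | g, (u, g') :: l => of g * t ^ (u : ℤ) * syllableProd g' l

noncomputable def syllableWeight (S : Set H) : H → List (ℤˣ × H) → ℕ
  | g, [] => wordDist S 1 g
  | g, (_, g') :: l => wordDist S 1 g + 1 + syllableWeight S g' l

theorem of_mul_syllableProd (a g : H) (l : List (ℤˣ × H)) :
    of a * syllableProd φ g l = syllableProd φ (a * g) l := by
  cases l <;> simp [syllableProd, mul_assoc]

theorem syllableWeight_mul_le (hS : Submonoid.closure S = ⊤) (a g : H) (l : List (ℤˣ × H)) :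
    syllableWeight S (a * g) l ≤ wordDist S 1 a + syllableWeight S g l := by
  have := wordDist_one_mul_le hS a g
  cases l <;> simp only [syllableWeight] <;> omega

theorem exists_syllableProd_eq_list_prod (hS : Submonoid.closure S = ⊤)
    (l : List (HNNExtension H A B φ)) (hl : ∀ x ∈ l, x ∈ of '' S ∪ {t, t⁻¹}) :
    ∃ g ps, syllableProd φ g ps = l.prod ∧ syllableWeight S g ps ≤ l.length := by
  induction l with
  | nil => exact ⟨1, [], by simp [syllableProd], by simp [syllableWeight, wordDist_self]⟩
  | cons x l ih =>
    obtain ⟨g, ps, hprod, hweight⟩ := ih fun y hy => hl y (List.mem_cons_of_mem _ hy)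
    rcases hl x List.mem_cons_self with ⟨s, hs, rfl⟩ | rfl | rfl
    · refine ⟨s * g, ps, by rw [← of_mul_syllableProd, hprod, List.prod_cons], ?_⟩
      have := syllableWeight_mul_le hS s g ps
      have := wordDist_one_le_one hs
      simp only [List.length_cons]
      omega
    · refine ⟨1, (1, g) :: ps, by simp [syllableProd, hprod], ?_⟩
      simp only [syllableWeight, wordDist_self, List.length_cons]
      omega
    · refine ⟨1, (-1, g) :: ps, by simp [syllableProd, hprod], ?_⟩
      simp only [syllableWeight, wordDist_self, List.length_cons]
      omega

theorem of_mul_prod_map_eq_syllableProd (g : H) (l : List (ℤˣ × H)) :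
    of g * (l.map fun x => t ^ (x.1 : ℤ) * of x.2).prod = syllableProd φ g l := by
  induction l generalizing g with
  | nil => simp [syllableProd]
  | cons p l ih => simp [syllableProd, ← ih, mul_assoc]

theorem eq_nil_of_isChain_of_syllableProd_eq_of {g h : H} {l : List (ℤˣ × H)}
    (hl : l.IsChain fun a b => a.2 ∈ toSubgroup A B a.1 → a.1 = b.1)
    (heq : syllableProd φ g l = of h) : l = [] :=
  ReducedWord.toList_eq_nil_of_mem_of_range φ ⟨g, l, hl⟩
    ⟨h, heq.symm.trans (of_mul_prod_map_eq_syllableProd φ g l).symm⟩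

theorem t_zpow_mul_of_mul_t_zpow_neg (u : ℤˣ) (a : toSubgroup A B u) :
    (t ^ (u : ℤ) * of (a : H) * t ^ (-(u : ℤ)) : HNNExtension H A B φ) =
      of (toSubgroupEquiv φ u a : H) := by
  rcases Int.units_eq_one_or u with rfl | rfl
  · exact (equiv_eq_conj a).symm
  · exact (equiv_symm_eq_conj a).symm

theorem mem_of_mem_toSubgroup (hA : (A : Set H) ⊆ S) (hB : (B : Set H) ⊆ S) {u : ℤˣ} {g : H}
    (hg : g ∈ toSubgroup A B u) : g ∈ S := by
  rcases Int.units_eq_one_or u with rfl | rfl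
  · exact hA hg
  · exact hB hg

theorem exists_shorter_of_pinch (hS : Submonoid.closure S = ⊤) (hA : (A : Set H) ⊆ S)
    (hB : (B : Set H) ⊆ S) {u v : ℤˣ} {a : H} (ha : a ∈ toSubgroup A B u) (huv : u ≠ v)
    (b : H) (l₂ : List (ℤˣ × H)) :
    ∀ (g : H) (l₁ : List (ℤˣ × H)), ∃ g' l',
      syllableProd φ g' l' = syllableProd φ g (l₁ ++ (u, a) :: (v, b) :: l₂) ∧
      l'.length < (l₁ ++ (u, a) :: (v, b) :: l₂).length ∧
      syllableWeight S g' l' ≤ syllableWeight S g (l₁ ++ (u, a) :: (v, b) :: l₂)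
  | g, [] => by
    obtain rfl : v = -u := neg_eq_iff_eq_neg.mp (Int.units_ne_iff_eq_neg.mp huv).symm
    obtain ⟨c, hcS, hc⟩ : ∃ c ∈ S,
        (of c : HNNExtension H A B φ) = t ^ (u : ℤ) * of a * t ^ (-(u : ℤ)) :=
      ⟨_, mem_of_mem_toSubgroup hA hB (toSubgroupEquiv φ u ⟨a, ha⟩).2,
        (t_zpow_mul_of_mul_t_zpow_neg φ u ⟨a, ha⟩).symm⟩
    refine ⟨g * (c * b), l₂, ?_, by simp, ?_⟩
    · rw [← of_mul_syllableProd, ← of_mul_syllableProd, hc]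
      simp [syllableProd, mul_assoc]
    · have := wordDist_one_le_one hcS
      have := syllableWeight_mul_le hS g (c * b) l₂
      have := syllableWeight_mul_le hS c b l₂
      simp only [List.nil_append, syllableWeight]
      omega
  | g, (w, x) :: l₁ => by
    obtain ⟨g', l', hprod, hlen, hweight⟩ := exists_shorter_of_pinch hS hA hB ha huv b l₂ x l₁
    refine ⟨g, (w, g') :: l', ?_, ?_, ?_⟩
    · simp [syllableProd, hprod]
    · simpa using hlen
    · simp only [List.cons_append, syllableWeight] at hweight ⊢
      omega

theorem wordDist_one_le_syllableWeight (hS : Submonoid.closure S = ⊤) (hA : (A : Set H) ⊆ S)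
    (hB : (B : Set H) ⊆ S) (l : List (ℤˣ × H)) (g h : H) (heq : syllableProd φ g l = of h) :
    wordDist S 1 h ≤ syllableWeight S g l := by
  induction hn : l.length using Nat.strong_induction_on generalizing g l with
  | _ n ih =>
  by_cases hred : l.IsChain fun a b => a.2 ∈ toSubgroup A B a.1 → a.1 = b.1
  · obtain rfl := eq_nil_of_isChain_of_syllableProd_eq_of φ hred heq
    obtain rfl : g = h := of_injective φ heq
    exact le_rfl
  · simp only [List.isChain_iff_forall_rel_of_append_cons_cons, not_forall] at hred
    obtain ⟨⟨u, a⟩, ⟨v, b⟩, l₁, l₂, rfl, ha, huv⟩ := hred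
    obtain ⟨g', l', hprod, hlen, hweight⟩ := exists_shorter_of_pinch φ hS hA hB ha huv b l₂ g l₁
    exact (ih _ (hn ▸ hlen) l' g' (hprod.trans heq) rfl).trans hweight

theorem wordDist_one_le_length_of_prod_eq_of (hS : Submonoid.closure S = ⊤)
    (hA : (A : Set H) ⊆ S) (hB : (B : Set H) ⊆ S) (l : List (HNNExtension H A B φ)) (h : H)
    (hl : ∀ x ∈ l, x ∈ of '' S ∪ {t, t⁻¹}) (hprod : l.prod = of h) :
    wordDist S 1 h ≤ l.length := by
  obtain ⟨g, ps, hps, hweight⟩ := exists_syllableProd_eq_list_prod φ hS l hl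
  exact (wordDist_one_le_syllableWeight φ hS hA hB ps g h (hps.trans hprod)).trans hweight

end HNNExtension

/-- Let `G = HNNExtension H B A φ.symm` be the HNN extension of `H` with stable letter `t`
and associated subgroups `A, B ≤ H` (with this orientation `t⁻¹ * of a * t = of (φ a)` for
`a ∈ A`, i.e. `t⁻¹At = B`).  If `S_H` is a symmetric generating set of `H` containing
`A ∪ B`, and `S_G = of '' S_H ∪ {t, t⁻¹}`, then `H` is isometrically embedded in `G`. -/
theorem stmt_7 {H : Type*} [Group H] (A B : Subgroup H) (φ : A ≃* B)
    (SH : Set H) (hSHsymm : ∀ s ∈ SH, s⁻¹ ∈ SH) (hSHgen : Subgroup.closure SH = ⊤)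
    (hA : (A : Set H) ⊆ SH) (hB : (B : Set H) ⊆ SH)
    (h₁ h₂ : H) :
    wordDist SH h₁ h₂ =
      wordDist ((of '' SH) ∪ {t, t⁻¹} : Set (HNNExtension H B A φ.symm))
        (of h₁) (of h₂) := by
  have hS := Submonoid.closure_eq_top_of_inv_mem hSHsymm hSHgen
  exact wordDist_eq_wordDist_map of hS Set.subset_union_left
    (wordDist_one_le_length_of_prod_eq_of φ.symm hS hB hA) h₁ h₂
end

section
/- Let β : ℕ → ℝ≥0 be a nondecreasing function and N > 3 an integer. Suppose that for every n > N there exists a real number x with 1/3 ≤ x ≤ 1/2 such that β(n) ≤ β(⌊(x + 1/6 + 0.001)·n⌋) + β(⌊(1 - x + 1/6 + 0.001)·n⌋), where both arguments are strictly less than n. Then β(n) ≤ β(N)·n^{1.9} for all n ≥ 1, and consequently β(n)/n² → 0 as n → ∞. -/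
open Filter

lemma rpow19_le (t : ℝ) (ht : 0 ≤ t) : t ^ (1.9 : ℝ) ≤ 0.9 * t ^ 2 + 0.1 * t := by
  have h := Real.geom_mean_le_arith_mean2_weighted (by norm_num : (0:ℝ) ≤ 0.9)
    (by norm_num : (0:ℝ) ≤ 0.1) (sq_nonneg t) ht (by norm_num)
  have he : t ^ (1.9 : ℝ) = (t ^ 2) ^ (0.9 : ℝ) * t ^ (0.1 : ℝ) := by
    have h2 : (t ^ 2 : ℝ) = t ^ (2 : ℝ) := by
      rw [← Real.rpow_natCast t 2]; norm_num
    rw [h2, ← Real.rpow_mul ht]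
    rw [show (1.9 : ℝ) = 1.8 + 0.1 by norm_num, Real.rpow_add' ht (by norm_num)]
    norm_num
  linarith [he ▸ h]

set_option maxHeartbeats 1000000 in
theorem stmt_11 (β : ℕ → NNReal) (hmono : Monotone β) (N : ℕ) (hN : 3 < N)
    (hrec : ∀ n : ℕ, N < n → ∃ x : ℝ, 1/3 ≤ x ∧ x ≤ 1/2 ∧
      ⌊(x + 1/6 + 0.001) * (n : ℝ)⌋₊ < n ∧
      ⌊(1 - x + 1/6 + 0.001) * (n : ℝ)⌋₊ < n ∧
      β n ≤ β ⌊(x + 1/6 + 0.001) * (n : ℝ)⌋₊ + β ⌊(1 - x + 1/6 + 0.001) * (n : ℝ)⌋₊) :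
    (∀ n : ℕ, 1 ≤ n → (β n : ℝ) ≤ (β N : ℝ) * (n : ℝ) ^ (1.9 : ℝ)) ∧
      Tendsto (fun n : ℕ => (β n : ℝ) / (n : ℝ) ^ 2) atTop (nhds 0) := by
  have hβN : (0:ℝ) ≤ (β N : ℝ) := (β N).coe_nonneg
  have main : ∀ n : ℕ, 1 ≤ n → (β n : ℝ) ≤ (β N : ℝ) * (n : ℝ) ^ (1.9 : ℝ) := by
    intro n
    induction n using Nat.strong_induction_on with
    | _ n ih =>
      intro hn
      by_cases hcase : n ≤ N
      · have h1 : (β n : ℝ) ≤ (β N : ℝ) := by exact_mod_cast hmono hcase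
        have h2 : (1:ℝ) ≤ (n : ℝ) ^ (1.9 : ℝ) :=
          Real.one_le_rpow (by exact_mod_cast hn) (by norm_num)
        nlinarith
      · push_neg at hcase
        obtain ⟨x, hx1, hx2, ha, hb, hβ⟩ := hrec n hcase
        set p : ℝ := x + 1/6 + 0.001 with hp
        set q : ℝ := 1 - x + 1/6 + 0.001 with hq
        set a : ℕ := ⌊p * (n : ℝ)⌋₊ with hadef
        set b : ℕ := ⌊q * (n : ℝ)⌋₊ with hbdef
        clear_value p q a b
        have hn5 : (5:ℝ) ≤ (n : ℝ) := by
          have : 5 ≤ n := by omega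
          exact_mod_cast this
        have hp0 : 0 ≤ p := by rw [hp]; linarith
        have hq0 : 0 ≤ q := by rw [hq]; linarith
        have hp1 : p ≤ 1 := by rw [hp]; norm_num; linarith
        have hq1 : q ≤ 1 := by rw [hq]; norm_num; linarith
        have hn0 : (0:ℝ) ≤ (n : ℝ) := by linarith
        have ha1 : 1 ≤ a := by
          rw [hadef]
          apply Nat.le_floor
          have h5 : (0.5:ℝ) ≤ p := by rw [hp]; norm_num; linarith
          have := mul_le_mul_of_nonneg_right h5 hn0
          push_cast
          linarith
        have hb1 : 1 ≤ b := by
          rw [hbdef]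
          apply Nat.le_floor
          have h5 : (0.5:ℝ) ≤ q := by rw [hq]; norm_num; linarith
          have := mul_le_mul_of_nonneg_right h5 hn0
          push_cast
          linarith
        have hale : (a : ℝ) ≤ p * n := by
          rw [hadef]; exact Nat.floor_le (by positivity)
        have hble : (b : ℝ) ≤ q * n := by
          rw [hbdef]; exact Nat.floor_le (by positivity)
        have iha := ih a ha ha1
        have ihb := ih b hb hb1
        have hra : (a : ℝ) ^ (1.9:ℝ) ≤ p ^ (1.9:ℝ) * (n:ℝ) ^ (1.9:ℝ) := by
          rw [← Real.mul_rpow hp0 hn0]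
          exact Real.rpow_le_rpow (Nat.cast_nonneg a) hale (by norm_num)
        have hrb : (b : ℝ) ^ (1.9:ℝ) ≤ q ^ (1.9:ℝ) * (n:ℝ) ^ (1.9:ℝ) := by
          rw [← Real.mul_rpow hq0 hn0]
          exact Real.rpow_le_rpow (Nat.cast_nonneg b) hble (by norm_num)
        have hpa := rpow19_le p hp0
        have hqb := rpow19_le q hq0
        have hsum : 0.9 * p ^ 2 + 0.1 * p + (0.9 * q ^ 2 + 0.1 * q) ≤ 1 := by
          rw [hp, hq]; nlinarith [sq_nonneg (x - 1/3), sq_nonneg (1/2 - x),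
            mul_nonneg (by linarith : (0:ℝ) ≤ x - 1/3) (by linarith : (0:ℝ) ≤ 1/2 - x)]
        have hβr : (β n : ℝ) ≤ (β a : ℝ) + (β b : ℝ) := by exact_mod_cast hβ
        have hnr0 : (0:ℝ) ≤ (n:ℝ) ^ (1.9:ℝ) := Real.rpow_nonneg hn0 _
        calc (β n : ℝ) ≤ (β a : ℝ) + (β b : ℝ) := hβr
          _ ≤ (β N : ℝ) * ((a:ℝ) ^ (1.9:ℝ) + (b:ℝ) ^ (1.9:ℝ)) := by
              rw [mul_add]; linarith
          _ ≤ (β N : ℝ) * ((p ^ (1.9:ℝ) + q ^ (1.9:ℝ)) * (n:ℝ) ^ (1.9:ℝ)) := by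
              apply mul_le_mul_of_nonneg_left _ hβN
              rw [add_mul]; linarith
          _ ≤ (β N : ℝ) * (1 * (n:ℝ) ^ (1.9:ℝ)) := by
              apply mul_le_mul_of_nonneg_left _ hβN
              apply mul_le_mul_of_nonneg_right _ hnr0
              linarith
          _ = (β N : ℝ) * (n:ℝ) ^ (1.9:ℝ) := by ring
  refine ⟨main, ?_⟩
  apply squeeze_zero' (g := fun n : ℕ => (β N : ℝ) * (n : ℝ) ^ (-(0.1:ℝ)))
  · filter_upwards with n
    positivity
  · filter_upwards [eventually_ge_atTop 1] with n hn
    have hnpos : (0:ℝ) < (n:ℝ) := by exact_mod_cast hn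
    rw [div_le_iff₀ (by positivity)]
    have key : (β N : ℝ) * (n : ℝ) ^ (-(0.1:ℝ)) * (n:ℝ) ^ 2
        = (β N : ℝ) * (n : ℝ) ^ (1.9:ℝ) := by
      have h2 : ((n:ℝ) ^ 2 : ℝ) = (n:ℝ) ^ (2:ℝ) := by
        rw [← Real.rpow_natCast (n:ℝ) 2]; norm_num
      rw [h2, mul_assoc, ← Real.rpow_add hnpos]
      norm_num
    rw [key]
    exact main n hn
  · have h1 : Tendsto (fun n : ℕ => ((n:ℝ)) ^ (-(0.1:ℝ))) atTop (nhds 0) :=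
      (tendsto_rpow_neg_atTop (by norm_num)).comp tendsto_natCast_atTop_atTop
    have h2 := h1.const_mul (β N : ℝ)
    rw [mul_zero] at h2
    exact h2
end
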